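/- arXiv:2406.01552 — 3 statements merged into one kernel-verified Lean document; each statement's English description precedes it below -/
import Mathlib

section
/- Let f : ℝ^{d×d}_{sym} → ℝ^{d×d}_{sym} be an O(d)-equivariant function on symmetric matrices. Then there exists a function f̃ on diagonal matrices (namely the restriction of f) such that for every symmetric A with eigendecomposition A = Q Λ Qᵀ (Q orthogonal, Λ diagonal), f(A) = Q f̃(Λ) Qᵀ; moreover f̃ maps diagonal matrices to diagonal matrices and is permutation-equivariant: f̃(P Λ Pᵀ) = P f̃(Λ) Pᵀ for all permutation matrices P. -/
open Matrix

lemma perm_orth {d : ℕ} (σ : Equiv.Perm (Fin d)) :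
    σ.permMatrix ℝ ∈ Matrix.orthogonalGroup (Fin d) ℝ := by
  rw [Matrix.mem_orthogonalGroup_iff]
  have hstar : star (σ.permMatrix ℝ) = σ.symm.toPEquiv.toMatrix := by
    simp [Matrix.star_eq_conjTranspose, Equiv.Perm.permMatrix, ← PEquiv.toMatrix_symm,
      ← Equiv.toPEquiv_symm]
  rw [← Matrix.conjTranspose_eq_transpose_of_trivial, ← Matrix.star_eq_conjTranspose, hstar]
  show σ.toPEquiv.toMatrix * σ.symm.toPEquiv.toMatrix = 1
  rw [← PEquiv.toMatrix_trans, ← Equiv.toPEquiv_trans]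
  simp

lemma sign_orth {d : ℕ} (v : Fin d → ℝ) (hv : ∀ i, v i = 1 ∨ v i = -1) :
    Matrix.diagonal v ∈ Matrix.orthogonalGroup (Fin d) ℝ := by
  rw [Matrix.mem_orthogonalGroup_iff]
  simp [Matrix.star_eq_conjTranspose, Matrix.diagonal_mul_diagonal]
  ext i
  rcases hv i with h1 | h1 <;> simp [h1]

/-- An `O(d)`-equivariant function `f` on symmetric matrices is determined by a
permutation-equivariant, diagonal-preserving function `f̃` on diagonal matrices:
`f(A) = Q f̃(Λ) Qᵀ` for any eigendecomposition `A = Q Λ Qᵀ`. -/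
theorem stmt6 {d : ℕ} (f : Matrix (Fin d) (Fin d) ℝ → Matrix (Fin d) (Fin d) ℝ)
    (hsymm : ∀ A : Matrix (Fin d) (Fin d) ℝ, A.IsSymm → (f A).IsSymm)
    (hequiv : ∀ Q ∈ Matrix.orthogonalGroup (Fin d) ℝ,
      ∀ A : Matrix (Fin d) (Fin d) ℝ, A.IsSymm → f (Q * A * Qᵀ) = Q * f A * Qᵀ) :
    ∃ ftilde : Matrix (Fin d) (Fin d) ℝ → Matrix (Fin d) (Fin d) ℝ,
      (∀ Λ : Matrix (Fin d) (Fin d) ℝ, Λ.IsDiag → ftilde Λ = f Λ) ∧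
      (∀ Λ : Matrix (Fin d) (Fin d) ℝ, Λ.IsDiag → (ftilde Λ).IsDiag) ∧
      (∀ (A Q Λ : Matrix (Fin d) (Fin d) ℝ), Q ∈ Matrix.orthogonalGroup (Fin d) ℝ →
        Λ.IsDiag → A = Q * Λ * Qᵀ → f A = Q * ftilde Λ * Qᵀ) ∧
      (∀ (σ : Equiv.Perm (Fin d)) (Λ : Matrix (Fin d) (Fin d) ℝ), Λ.IsDiag →
        ftilde (σ.permMatrix ℝ * Λ * (σ.permMatrix ℝ)ᵀ) =
          σ.permMatrix ℝ * ftilde Λ * (σ.permMatrix ℝ)ᵀ) := by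
  refine ⟨f, fun _ _ => rfl, ?_, ?_, ?_⟩
  · -- diagonal preserving
    intro Λ hΛ i j hij
    set v : Fin d → ℝ := fun k => if k = i then -1 else 1 with hv
    have hvpm : ∀ k, v k = 1 ∨ v k = -1 := by
      intro k; by_cases h : k = i <;> simp [hv, h]
    have hS := sign_orth v hvpm
    have hΛsymm : Λ.IsSymm := hΛ.isSymm
    have hkey := hequiv _ hS Λ hΛsymm
    have hfix : Matrix.diagonal v * Λ * (Matrix.diagonal v)ᵀ = Λ := by
      ext a b
      rcases eq_or_ne a b with rfl | hab
      · simp [Matrix.diagonal_transpose, Matrix.diagonal_mul, Matrix.mul_diagonal]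
        rcases hvpm a with h1 | h1 <;> simp [h1]
      · simp [Matrix.diagonal_transpose, Matrix.diagonal_mul, Matrix.mul_diagonal, hΛ hab]
    rw [hfix] at hkey
    have := congrFun (congrFun hkey i) j
    simp [Matrix.diagonal_transpose, Matrix.diagonal_mul, Matrix.mul_diagonal, hv,
      Ne.symm hij] at this
    linarith
  · -- eigendecomposition
    intro A Q Λ hQ hΛ hA
    rw [hA]
    exact hequiv Q hQ Λ hΛ.isSymm
  · -- permutation equivariance
    intro σ Λ hΛ
    exact hequiv _ (perm_orth σ) Λ hΛ.isSymm
end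

section
/- Let ε ∈ (0, 1/3] and set q = √((1/3)(1−ε)(1−3ε)). Let v ∈ ℝ^n have i.i.d. entries distributed as Z = XY + (1−X)W, where X ~ Bernoulli(ε), Y ~ N(0, (ε+q)/(εn)), and W ~ N(0, (1−ε−q)/(n(1−ε))) are independent (Corrected Bernoulli-Gaussian). Then E[‖v‖₂²] = 1 and E[‖v‖₄⁴] = 1/(εn). -/
open MeasureTheory Real Set
open scoped NNReal ENNReal

lemma key_Ioi {b : ℝ} (hb : 0 < b) {s : ℝ} (hs : 0 < s) :
    ∫ x in Ioi (0:ℝ), x ^ s * rexp (-b * x^2)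
      = (1/2) * ((1/b) ^ ((s+1)/2) * Real.Gamma ((s+1)/2)) := by
  have h := integral_comp_rpow_Ioi_of_pos (p := 2)
    (g := fun t : ℝ => (1/2) * (t ^ ((s+1)/2 - 1) * rexp (-(b * t)))) zero_lt_two
  have h2 : ∫ t in Ioi (0:ℝ), t ^ ((s+1)/2 - 1) * rexp (-(b * t))
      = (1/b) ^ ((s+1)/2) * Real.Gamma ((s+1)/2) :=
    integral_rpow_mul_exp_neg_mul_Ioi (by linarith) hb
  rw [integral_const_mul, h2] at h
  rw [← h]
  refine setIntegral_congr_fun measurableSet_Ioi (fun x hx => ?_)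
  have hx0 : (0:ℝ) < x := hx
  have hx2 : (x:ℝ) ^ (2:ℝ) = x ^ (2:ℕ) := by
    rw [← Real.rpow_natCast x 2]; norm_num
  simp only [smul_eq_mul]
  rw [← Real.rpow_natCast x 2, ← Real.rpow_mul hx0.le]
  have : x ^ ((2:ℝ) * ((s+1)/2 - 1)) = x ^ (s - 1) := by ring_nf
  rw [this]
  rw [show (2:ℝ) - 1 = 1 by norm_num, Real.rpow_one, hx2]
  rw [show x ^ (s:ℝ) = x ^ (1 + (s-1)) by ring_nf, Real.rpow_add hx0, Real.rpow_one]
  push_cast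
  rw [neg_mul]
  ring_nf
  rw [mul_comm (x ^ 2) b]
  rw [hx2]

lemma int_even_pow {b : ℝ} (hb : 0 < b) {k : ℕ} (hk : Even k) (hk0 : 0 < k) :
    ∫ x : ℝ, x ^ k * rexp (-b * x^2)
      = (1/b) ^ ((k+1:ℝ)/2) * Real.Gamma ((k+1)/2) := by
  have habs : (∫ x : ℝ, x ^ k * rexp (-b * x^2))
      = ∫ x : ℝ, (fun y => y ^ k * rexp (-b * y^2)) |x| := by
    congr 1; ext x
    simp only [hk.pow_abs, sq_abs]
  rw [habs, integral_comp_abs (f := fun y => y ^ k * rexp (-b * y^2))]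
  have hIoi : (∫ x in Ioi (0:ℝ), x ^ k * rexp (-b * x^2))
      = ∫ x in Ioi (0:ℝ), x ^ (k:ℝ) * rexp (-b * x^2) := by
    refine setIntegral_congr_fun measurableSet_Ioi (fun x hx => ?_)
    rw [Real.rpow_natCast]
  rw [hIoi, key_Ioi hb (by positivity : (0:ℝ) < (k:ℝ))]
  ring

open ProbabilityTheory

lemma gammaA : Real.Gamma (3/2) = √π / 2 := by
  rw [show (3:ℝ)/2 = 1/2 + 1 by norm_num, Real.Gamma_add_one (by norm_num),
    Real.Gamma_one_half_eq]
  ring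

lemma gammaB : Real.Gamma (5/2) = 3 * √π / 4 := by
  rw [show (5:ℝ)/2 = 3/2 + 1 by norm_num, Real.Gamma_add_one (by norm_num), gammaA]
  ring

lemma pdf_eq (v : ℝ≥0) (x : ℝ) :
    gaussianPDFReal 0 v x = (√(2 * π * v))⁻¹ * rexp (-(2 * (v:ℝ))⁻¹ * x ^ 2) := by
  rw [gaussianPDFReal]
  congr 1
  rw [sub_zero]
  ring_nf

lemma gauss_moment2 (v : ℝ≥0) (hv : v ≠ 0) :
    ∫ x : ℝ, x ^ 2 * gaussianPDFReal 0 v x = v := by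
  have hv0 : (0:ℝ) < v := by
    exact_mod_cast pos_iff_ne_zero.mpr hv
  have hb : (0:ℝ) < (2 * (v:ℝ))⁻¹ := by positivity
  simp_rw [pdf_eq, mul_comm ((√(2 * π * (v:ℝ)))⁻¹), ← mul_assoc]
  rw [integral_mul_const, int_even_pow hb (by decide) (by norm_num)]
  rw [one_div, inv_inv, show (((2:ℕ):ℝ)+1)/2 = 3/2 by norm_num, gammaA]
  have h2v : (0:ℝ) < 2 * v := by positivity
  have h1 : ((2:ℝ) * v) ^ ((3:ℝ)/2) = (2*v) * √(2*v) := by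
    rw [show (3:ℝ)/2 = 1 + 1/2 by norm_num, Real.rpow_add h2v, Real.rpow_one,
      Real.sqrt_eq_rpow]
  have h2 : √(2 * π * v) = √(2*v) * √π := by
    rw [show (2:ℝ) * π * v = (2*v) * π by ring, Real.sqrt_mul h2v.le]
  rw [h1, h2]
  have hs : (0:ℝ) < √(2*v) := Real.sqrt_pos.mpr h2v
  have hp : (0:ℝ) < √π := Real.sqrt_pos.mpr pi_pos
  field_simp

lemma gauss_moment4 (v : ℝ≥0) (hv : v ≠ 0) :
    ∫ x : ℝ, x ^ 4 * gaussianPDFReal 0 v x = 3 * (v:ℝ)^2 := by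
  have hv0 : (0:ℝ) < v := by
    exact_mod_cast pos_iff_ne_zero.mpr hv
  have hb : (0:ℝ) < (2 * (v:ℝ))⁻¹ := by positivity
  simp_rw [pdf_eq, mul_comm ((√(2 * π * (v:ℝ)))⁻¹), ← mul_assoc]
  rw [integral_mul_const, int_even_pow hb (by decide) (by norm_num)]
  rw [one_div, inv_inv, show (((4:ℕ):ℝ)+1)/2 = 5/2 by norm_num, gammaB]
  have h2v : (0:ℝ) < 2 * v := by positivity
  have h1 : ((2:ℝ) * v) ^ ((5:ℝ)/2) = (2*v)^2 * √(2*v) := by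
    rw [show (5:ℝ)/2 = 2 + 1/2 by norm_num, Real.rpow_add h2v,
      Real.sqrt_eq_rpow, show ((2:ℝ)*v) ^ (2:ℝ) = (2*v)^(2:ℕ) by
        rw [← Real.rpow_natCast (2*(v:ℝ)) 2]; norm_num]
  have h2 : √(2 * π * v) = √(2*v) * √π := by
    rw [show (2:ℝ) * π * v = (2*v) * π by ring, Real.sqrt_mul h2v.le]
  rw [h1, h2]
  have hs : (0:ℝ) < √(2*v) := Real.sqrt_pos.mpr h2v
  have hp : (0:ℝ) < √π := Real.sqrt_pos.mpr pi_pos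
  field_simp
  nlinarith [Real.sq_sqrt h2v.le, Real.sq_sqrt pi_pos.le, hs, hp]


lemma integrable_pow_mul_pdf (v : ℝ≥0) (hv : v ≠ 0) (k : ℕ) :
    Integrable (fun x : ℝ => x ^ k * gaussianPDFReal 0 v x) := by
  have hv0 : (0:ℝ) < v := by exact_mod_cast pos_iff_ne_zero.mpr hv
  have hb : (0:ℝ) < (2 * (v:ℝ))⁻¹ := by positivity
  have h := (integrable_rpow_mul_exp_neg_mul_sq hb
    (s := (k:ℝ)) (lt_of_lt_of_le (by norm_num) (Nat.cast_nonneg k))).const_mul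
    ((√(2 * π * (v:ℝ)))⁻¹)
  refine h.congr (Filter.Eventually.of_forall fun x => ?_)
  simp only [pdf_eq, Real.rpow_natCast]
  ring

lemma integrable_pow_gaussianReal (v : ℝ≥0) (hv : v ≠ 0) (k : ℕ) :
    Integrable (fun x : ℝ => x ^ k) (gaussianReal 0 v) := by
  rw [gaussianReal_of_var_ne_zero _ hv]
  have hmeq : gaussianPDF 0 v = fun x => ((gaussianPDFReal 0 v x).toNNReal : ℝ≥0∞) := rfl
  rw [hmeq, integrable_withDensity_iff_integrable_smul
    ((measurable_gaussianPDFReal 0 v).real_toNNReal)]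
  refine (integrable_pow_mul_pdf v hv k).congr (Filter.Eventually.of_forall fun x => ?_)
  simp only [NNReal.smul_def, smul_eq_mul, Real.coe_toNNReal _ (gaussianPDFReal_nonneg 0 v x)]
  ring

lemma integral_pow_gaussianReal (v : ℝ≥0) (hv : v ≠ 0) (k : ℕ) :
    ∫ x, x ^ k ∂(gaussianReal 0 v) = ∫ x : ℝ, x ^ k * gaussianPDFReal 0 v x := by
  rw [gaussianReal_of_var_ne_zero _ hv]
  have hmeq : gaussianPDF 0 v = fun x => ((gaussianPDFReal 0 v x).toNNReal : ℝ≥0∞) := rfl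
  rw [hmeq, integral_withDensity_eq_integral_smul
    ((measurable_gaussianPDFReal 0 v).real_toNNReal)]
  congr 1; ext x
  simp only [NNReal.smul_def, smul_eq_mul, Real.coe_toNNReal _ (gaussianPDFReal_nonneg 0 v x)]
  ring

lemma gaussianReal_moment2 (v : ℝ≥0) (hv : v ≠ 0) :
    ∫ x, x ^ 2 ∂(gaussianReal 0 v) = v := by
  rw [integral_pow_gaussianReal v hv 2, gauss_moment2 v hv]

lemma gaussianReal_moment4 (v : ℝ≥0) (hv : v ≠ 0) :
    ∫ x, x ^ 4 ∂(gaussianReal 0 v) = 3 * (v:ℝ)^2 := by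
  rw [integral_pow_gaussianReal v hv 4, gauss_moment4 v hv]

lemma integrable_pow_mix {a c : ℝ} (v1 v2 : ℝ≥0) (hv1 : v1 ≠ 0) (hv2 : v2 ≠ 0) (k : ℕ) :
    Integrable (fun x : ℝ => x ^ k)
      (ENNReal.ofReal a • gaussianReal 0 v1 + ENNReal.ofReal c • gaussianReal 0 v2) := by
  exact Integrable.add_measure
    ((integrable_pow_gaussianReal v1 hv1 k).smul_measure ENNReal.ofReal_ne_top)
    ((integrable_pow_gaussianReal v2 hv2 k).smul_measure ENNReal.ofReal_ne_top)

lemma integral_pow_mix {a c : ℝ} (ha : 0 ≤ a) (hc : 0 ≤ c) (v1 v2 : ℝ≥0)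
    (hv1 : v1 ≠ 0) (hv2 : v2 ≠ 0) (k : ℕ) :
    ∫ x, x ^ k ∂(ENNReal.ofReal a • gaussianReal 0 v1 + ENNReal.ofReal c • gaussianReal 0 v2)
      = a * ∫ x, x ^ k ∂(gaussianReal 0 v1) + c * ∫ x, x ^ k ∂(gaussianReal 0 v2) := by
  rw [integral_add_measure
    ((integrable_pow_gaussianReal v1 hv1 k).smul_measure ENNReal.ofReal_ne_top)
    ((integrable_pow_gaussianReal v2 hv2 k).smul_measure ENNReal.ofReal_ne_top),
    integral_smul_measure, integral_smul_measure, ENNReal.toReal_ofReal ha,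
    ENNReal.toReal_ofReal hc, smul_eq_mul, smul_eq_mul]

/-- Corrected Bernoulli-Gaussian moments: with `q = √((1/3)(1-ε)(1-3ε))`, if the
entries of `v ∈ ℝ^n` each have law `ε·N(0,(ε+q)/(εn)) + (1-ε)·N(0,(1-ε-q)/(n(1-ε)))`,
then `E‖v‖₂² = 1` and `E‖v‖₄⁴ = 1/(εn)`. -/
theorem stmt12 {Ω : Type*} [MeasurableSpace Ω] (μ : Measure Ω) [IsProbabilityMeasure μ]
    (n : ℕ) (hn : 0 < n) (ε : ℝ) (hε : ε ∈ Set.Ioc (0 : ℝ) (1 / 3))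
    (q : ℝ) (hq : q = Real.sqrt ((1 / 3) * (1 - ε) * (1 - 3 * ε)))
    (v : Ω → Fin n → ℝ) (hmeas : ∀ i, Measurable fun ω => v ω i)
    (hlaw : ∀ i, Measure.map (fun ω => v ω i) μ =
      ENNReal.ofReal ε • gaussianReal 0 (Real.toNNReal ((ε + q) / (ε * n))) +
        ENNReal.ofReal (1 - ε) •
          gaussianReal 0 (Real.toNNReal ((1 - ε - q) / (n * (1 - ε))))) :
    (∫ ω, ∑ i, v ω i ^ 2 ∂μ) = 1 ∧ (∫ ω, ∑ i, v ω i ^ 4 ∂μ) = 1 / (ε * n) := by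
  obtain ⟨hε0, hε3⟩ := hε
  have hn0 : (0:ℝ) < n := by exact_mod_cast hn
  have h1ε : (0:ℝ) < 1 - ε := by linarith
  have hq0 : 0 ≤ q := hq ▸ Real.sqrt_nonneg _
  have hq2 : q ^ 2 = (1/3) * (1-ε) * (1-3*ε) := by
    rw [hq, Real.sq_sqrt (by nlinarith)]
  have hqlt : q < 1 - ε := by nlinarith
  have hv1pos : (0:ℝ) < (ε + q) / (ε * n) := by positivity
  have hv2pos : (0:ℝ) < (1 - ε - q) / (n * (1 - ε)) := by
    apply div_pos (by linarith) (by positivity)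
  set v1 : ℝ≥0 := Real.toNNReal ((ε + q) / (ε * n)) with hv1def
  set v2 : ℝ≥0 := Real.toNNReal ((1 - ε - q) / (n * (1 - ε))) with hv2def
  have hv1 : v1 ≠ 0 := by
    rw [hv1def, Ne, Real.toNNReal_eq_zero, not_le]; exact hv1pos
  have hv2 : v2 ≠ 0 := by
    rw [hv2def, Ne, Real.toNNReal_eq_zero, not_le]; exact hv2pos
  have hv1c : (v1:ℝ) = (ε + q) / (ε * n) := Real.coe_toNNReal _ hv1pos.le
  have hv2c : (v2:ℝ) = (1 - ε - q) / (n * (1 - ε)) := Real.coe_toNNReal _ hv2pos.le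
  have hasm : ∀ k : ℕ, AEStronglyMeasurable (fun x : ℝ => x ^ k)
      (ENNReal.ofReal ε • gaussianReal 0 v1 + ENNReal.ofReal (1-ε) • gaussianReal 0 v2) :=
    fun k => (measurable_id.pow_const k).aestronglyMeasurable
  have hint : ∀ (k : ℕ) i, Integrable (fun ω => v ω i ^ k) μ := by
    intro k i
    have h := integrable_pow_mix (a := ε) (c := 1-ε)
      v1 v2 hv1 hv2 k
    rw [← hlaw i] at h
    exact (integrable_map_measure (measurable_id.pow_const k).aestronglyMeasurable
      (hmeas i).aemeasurable).mp h
  have hpush : ∀ (k : ℕ) i, ∫ ω, v ω i ^ k ∂μ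
      = ∫ x, x ^ k ∂(ENNReal.ofReal ε • gaussianReal 0 v1
          + ENNReal.ofReal (1-ε) • gaussianReal 0 v2) := by
    intro k i
    rw [← hlaw i, integral_map (hmeas i).aemeasurable]
    exact ((hlaw i).symm ▸ hasm k)
  have hm2 : ∀ i, ∫ ω, v ω i ^ 2 ∂μ = 1 / (n:ℝ) := by
    intro i
    rw [hpush 2 i, integral_pow_mix hε0.le h1ε.le v1 v2 hv1 hv2 2,
      gaussianReal_moment2 v1 hv1, gaussianReal_moment2 v2 hv2, hv1c, hv2c]
    field_simp
    ring
  have hm4 : ∀ i, ∫ ω, v ω i ^ 4 ∂μ = 1 / (ε * (n:ℝ)^2) := by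
    intro i
    rw [hpush 4 i, integral_pow_mix hε0.le h1ε.le v1 v2 hv1 hv2 4,
      gaussianReal_moment4 v1 hv1, gaussianReal_moment4 v2 hv2, hv1c, hv2c]
    field_simp
    linear_combination 3 * hq2
  constructor
  · rw [integral_finset_sum _ (fun i _ => hint 2 i)]
    simp only [hm2]
    rw [Finset.sum_const, Finset.card_univ, Fintype.card_fin, nsmul_eq_mul]
    field_simp
  · rw [integral_finset_sum _ (fun i _ => hint 4 i)]
    simp only [hm4]
    rw [Finset.sum_const, Finset.card_univ, Fintype.card_fin, nsmul_eq_mul]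
    field_simp
end

section
/- Every O(d)-equivariant polynomial f : ℝ^d → ℝ^{d×d}_{sym} of degree at most 2 (with O(d) acting on the input by v ↦ Mv and on the output by conjugation A ↦ M A Mᵀ) has the form f(a) = β₀ I + β₁ ⟨a,a⟩ I + β₂ a aᵀ for some real scalars β₀, β₁, β₂. -/
open Matrix MvPolynomial

section Helpers

variable {d : ℕ}

private theorem memO (A : Matrix (Fin d) (Fin d) ℝ) (h : A * Aᵀ = 1) :
    A ∈ Matrix.orthogonalGroup (Fin d) ℝ := by
  rw [Matrix.mem_orthogonalGroup_iff]
  convert h using 2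

private theorem memO' {A : Matrix (Fin d) (Fin d) ℝ}
    (h : A ∈ Matrix.orthogonalGroup (Fin d) ℝ) : A * Aᵀ = 1 := by
  rw [Matrix.mem_orthogonalGroup_iff] at h
  convert h using 2

private theorem interp (p : MvPolynomial (Fin d) ℝ) (hp : p.totalDegree ≤ 2)
    (a : Fin d → ℝ) (t : ℝ) :
    eval (t • a) p = (1 - t^2) * eval 0 p
      + ((t^2+t)/2) * eval a p + ((t^2-t)/2) * eval (-a) p := by
  rw [eval_eq', eval_eq', eval_eq', eval_eq', Finset.mul_sum, Finset.mul_sum, Finset.mul_sum,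
    ← Finset.sum_add_distrib, ← Finset.sum_add_distrib]
  refine Finset.sum_congr rfl fun v hv => ?_
  have hdeg : ∑ i, v i ≤ 2 := by
    have h := MvPolynomial.le_totalDegree hv
    have h2 : (v.sum fun _ e => e) = ∑ i, v i := Finsupp.sum_fintype _ _ fun _ => rfl
    rw [h2] at h; exact h.trans hp
  have h1 : ∏ i, (t • a) i ^ v i = t ^ (∑ i, v i) * ∏ i, a i ^ v i := by
    rw [← Finset.prod_pow_eq_pow_sum, ← Finset.prod_mul_distrib]
    exact Finset.prod_congr rfl fun i _ => by simp [mul_pow]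
  have h2 : ∏ i, (-a) i ^ v i = (-1:ℝ) ^ (∑ i, v i) * ∏ i, a i ^ v i := by
    rw [← Finset.prod_pow_eq_pow_sum, ← Finset.prod_mul_distrib]
    exact Finset.prod_congr rfl fun i _ => by rw [Pi.neg_apply, neg_eq_neg_one_mul, mul_pow]
  rw [h1, h2]
  rcases Nat.lt_or_ge 0 (∑ i, v i) with hn | hn
  · have h3 : ∏ i, (0 : Fin d → ℝ) i ^ v i = 0 := by
      obtain ⟨i, hi⟩ : ∃ i, v i ≠ 0 := by
        by_contra hc; push_neg at hc; simp [hc] at hn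
      exact Finset.prod_eq_zero (Finset.mem_univ i) (by simp [zero_pow hi])
    rw [h3]
    interval_cases h : (∑ i, v i) <;> norm_num <;> ring
  · have h0 : ∀ i, v i = 0 := fun i =>
      Finset.sum_eq_zero_iff.mp (Nat.le_zero.mp hn) i (Finset.mem_univ i)
    simp [h0]
    ring

private theorem vmv_mul_vmv (u v w x : Fin d → ℝ) :
    vecMulVec u v * vecMulVec w x = (∑ i, v i * w i) • vecMulVec u x := by
  ext i j
  simp [vecMulVec_apply, mul_apply, Finset.sum_mul]
  exact Finset.sum_congr rfl fun k _ => by ring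

private theorem vmv_mulVec (u v x : Fin d → ℝ) :
    (vecMulVec u v).mulVec x = (∑ i, v i * x i) • u := by
  funext i
  simp [vecMulVec_apply, mulVec, dotProduct, Finset.sum_mul, Finset.mul_sum]
  exact Finset.sum_congr rfl fun j _ => by ring

private theorem conj_vmv (M : Matrix (Fin d) (Fin d) ℝ) (a : Fin d → ℝ) :
    M * vecMulVec a a * Mᵀ = vecMulVec (M.mulVec a) (M.mulVec a) := by
  ext i j
  simp [vecMulVec_apply, mul_apply, mulVec, dotProduct, transpose_apply, Finset.sum_mul,
        Finset.mul_sum]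
  refine Finset.sum_congr rfl fun k _ => Finset.sum_congr rfl fun l _ => by ring

private theorem vmv_transpose (u v : Fin d → ℝ) : (vecMulVec u v)ᵀ = vecMulVec v u := by
  ext i j; simp [vecMulVec_apply, mul_comm]

private theorem vmv_smul (t : ℝ) (u v : Fin d → ℝ) :
    vecMulVec (t • u) (t • v) = (t * t) • vecMulVec u v := by
  ext i j; simp [vecMulVec_apply]; ring

noncomputable def hh (w : Fin d → ℝ) : Matrix (Fin d) (Fin d) ℝ :=
  1 - (2 / ∑ i, w i * w i) • vecMulVec w w

private theorem hh_transpose (w : Fin d → ℝ) : (hh w)ᵀ = hh w := by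
  unfold hh
  rw [transpose_sub, transpose_one, transpose_smul, vmv_transpose]

private theorem hh_mul_self (w : Fin d → ℝ) (hc : (∑ i, w i * w i) ≠ 0) : hh w * hh w = 1 := by
  unfold hh
  rw [sub_mul, mul_sub, mul_sub, one_mul, mul_one, Matrix.smul_mul, Matrix.mul_smul,
    Matrix.mul_smul, vmv_mul_vmv, smul_smul, smul_smul]
  have h2 : (2 / ∑ i, w i * w i) * (2 / ∑ i, w i * w i) * ∑ i, w i * w i
      = 2 / (∑ i, w i * w i) + 2 / (∑ i, w i * w i) := by
    field_simp; ring
  rw [one_mul, h2, add_smul]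
  abel

private theorem hh_mem (w : Fin d → ℝ) (hc : (∑ i, w i * w i) ≠ 0) :
    hh w ∈ Matrix.orthogonalGroup (Fin d) ℝ :=
  memO _ (by rw [hh_transpose]; exact hh_mul_self w hc)

private theorem hh_mulVec (w x : Fin d → ℝ) :
    (hh w).mulVec x = x - ((2 / ∑ i, w i * w i) * ∑ i, w i * x i) • w := by
  unfold hh
  rw [Matrix.sub_mulVec, Matrix.one_mulVec, Matrix.smul_mulVec, vmv_mulVec, smul_smul]

private theorem sum_sq_eq_zero {w : Fin d → ℝ} (h : ∑ i, w i * w i = 0) : w = 0 := by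
  funext i
  have := (Finset.sum_eq_zero_iff_of_nonneg (fun i _ => mul_self_nonneg (w i))).mp h i
    (Finset.mem_univ i)
  simpa [mul_self_eq_zero] using this

private theorem hh_maps (x y : Fin d → ℝ) (hnorm : ∑ i, x i * x i = ∑ i, y i * y i)
    (hxy : x - y ≠ 0) : (hh (x - y)).mulVec x = y := by
  set w := x - y with hw
  have hc : (∑ i, w i * w i) ≠ 0 := fun h => hxy (sum_sq_eq_zero h)
  have key : (∑ i, w i * w i) = 2 * (∑ i, w i * x i) := by
    have h1 : ∑ i, (w i * w i - 2 * (w i * x i)) = ∑ i, (y i * y i - x i * x i) :=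
      Finset.sum_congr rfl fun i _ => by simp [hw]; ring
    rw [Finset.sum_sub_distrib, Finset.sum_sub_distrib, ← Finset.mul_sum] at h1
    linarith [hnorm]
  rw [hh_mulVec]
  have : (2 / ∑ i, w i * w i) * ∑ i, w i * x i = 1 := by
    rw [key] at hc ⊢
    field_simp
    exact div_self (right_ne_zero_of_mul hc)
  rw [this, one_smul, hw, sub_sub_cancel]

private theorem perm_conj (σ : Equiv.Perm (Fin d)) (A : Matrix (Fin d) (Fin d) ℝ) :
    (σ.toPEquiv.toMatrix : Matrix (Fin d) (Fin d) ℝ) * A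
        * (σ.toPEquiv.toMatrix : Matrix (Fin d) (Fin d) ℝ)ᵀ
      = A.submatrix σ σ := by
  rw [← PEquiv.toMatrix_symm, ← Equiv.toPEquiv_symm, PEquiv.toMatrix_toPEquiv_mul,
    PEquiv.mul_toMatrix_toPEquiv]
  ext i j
  simp

private theorem perm_mem (σ : Equiv.Perm (Fin d)) :
    (σ.toPEquiv.toMatrix : Matrix (Fin d) (Fin d) ℝ) ∈ Matrix.orthogonalGroup (Fin d) ℝ := by
  apply memO
  rw [← PEquiv.toMatrix_symm, ← Equiv.toPEquiv_symm, PEquiv.mul_toMatrix_toPEquiv]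
  ext i j
  simp [PEquiv.toMatrix, Equiv.toPEquiv, one_apply, eq_comm]

private theorem perm_mulVec (σ : Equiv.Perm (Fin d)) (x : Fin d → ℝ) :
    (σ.toPEquiv.toMatrix : Matrix (Fin d) (Fin d) ℝ).mulVec x = fun i => x (σ i) := by
  funext i
  simp [mulVec, dotProduct, PEquiv.toMatrix_apply, Equiv.toPEquiv_apply]

private theorem sgn_mem (k : Fin d) :
    diagonal (fun l => if l = k then (-1:ℝ) else 1) ∈ Matrix.orthogonalGroup (Fin d) ℝ := by
  apply memO
  rw [diagonal_transpose, diagonal_mul_diagonal]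
  have h : (fun l => (if l = k then (-1:ℝ) else 1) * (if l = k then (-1:ℝ) else 1))
      = fun _ => (1:ℝ) := funext fun l => by by_cases h : l = k <;> simp [h]
  rw [h, diagonal_one]

private theorem diag_conj (v : Fin d → ℝ) (A : Matrix (Fin d) (Fin d) ℝ) (i j : Fin d) :
    (diagonal v * A * (diagonal v)ᵀ) i j = v i * A i j * v j := by
  rw [diagonal_transpose, Matrix.mul_diagonal, Matrix.diagonal_mul]

private theorem scalar_of_conj (hd : 0 < d) (A : Matrix (Fin d) (Fin d) ℝ)
    (hA : ∀ M ∈ Matrix.orthogonalGroup (Fin d) ℝ, M * A * Mᵀ = A) :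
    ∃ b : ℝ, A = b • 1 := by
  refine ⟨A ⟨0, hd⟩ ⟨0, hd⟩, ?_⟩
  have hoff : ∀ i j, i ≠ j → A i j = 0 := by
    intro i j hij
    have h := hA _ (sgn_mem i)
    have h2 := diag_conj (fun l => if l = i then (-1:ℝ) else 1) A i j
    rw [h] at h2
    have h3 : A i j = -1 * A i j * 1 := by
      simpa [Ne.symm hij] using h2
    linarith
  have hdiag : ∀ i, A i i = A ⟨0,hd⟩ ⟨0,hd⟩ := by
    intro i
    have h := hA _ (perm_mem (Equiv.swap i ⟨0,hd⟩))
    rw [perm_conj] at h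
    have h2 := congrFun (congrFun h i) i
    simpa [Equiv.swap_apply_left] using h2.symm
  ext k l
  by_cases hkl : k = l
  · subst hkl; simp [one_apply, hdiag k]
  · simp [hoff k l hkl, one_apply, hkl]

private theorem stab_struct (hd : 0 < d) (N : Matrix (Fin d) (Fin d) ℝ)
    (hN : ∀ M ∈ Matrix.orthogonalGroup (Fin d) ℝ,
      M.mulVec (Pi.single (⟨0,hd⟩ : Fin d) (1:ℝ)) = Pi.single ⟨0,hd⟩ 1 → M * N * Mᵀ = N) :
    ∃ b c : ℝ, N = b • 1 + c • vecMulVec (Pi.single (⟨0,hd⟩:Fin d) (1:ℝ)) (Pi.single ⟨0,hd⟩ 1) := by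
  set i0 : Fin d := ⟨0, hd⟩ with hi0
  set e₀ : Fin d → ℝ := Pi.single i0 1 with he
  have hoff : ∀ i j, i ≠ j → N i j = 0 := by
    intro i j hij
    obtain ⟨k, hk0, hkor⟩ : ∃ k, k ≠ i0 ∧ ((k = i ∧ k ≠ j) ∨ (k = j ∧ k ≠ i)) := by
      by_cases hi : i = i0
      · exact ⟨j, fun h => hij (by rw [hi, ← h]), Or.inr ⟨rfl, Ne.symm hij⟩⟩
      · exact ⟨i, hi, Or.inl ⟨rfl, hij⟩⟩
    have hfix : (diagonal (fun l => if l = k then (-1:ℝ) else 1)).mulVec e₀ = e₀ := by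
      funext l
      rw [Matrix.mulVec_diagonal]
      by_cases hl : l = i0
      · subst hl; simp [hk0, Ne.symm hk0]
      · simp [he, Pi.single_eq_of_ne hl]
    have h := hN _ (sgn_mem k) hfix
    have h2 := diag_conj (fun l => if l = k then (-1:ℝ) else 1) N i j
    rw [h] at h2
    rcases hkor with ⟨hki, hkj⟩ | ⟨hkj, hki⟩
    · subst hki
      have h3 : N k j = -1 * N k j * 1 := by simpa [Ne.symm hkj] using h2
      linarith
    · subst hkj
      have h3 : N i k = 1 * N i k * -1 := by simpa [Ne.symm hki] using h2
      linarith
  have hdiag : ∀ i j, i ≠ i0 → j ≠ i0 → N i i = N j j := by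
    intro i j hi hj
    set σ := Equiv.swap i j with hσ
    have hσ0 : σ i0 = i0 := Equiv.swap_apply_of_ne_of_ne (Ne.symm hi) (Ne.symm hj)
    have hfix : (σ.toPEquiv.toMatrix : Matrix (Fin d) (Fin d) ℝ).mulVec e₀ = e₀ := by
      rw [perm_mulVec]
      funext l
      by_cases hl : l = i0
      · subst hl; rw [hσ0]
      · have hne : σ l ≠ i0 := fun hc => hl (by
          have := congrArg σ.symm hc
          rwa [Equiv.symm_apply_apply, ← hσ0, Equiv.symm_apply_apply] at this)
        rw [he]
        simp [Pi.single_eq_of_ne hne, Pi.single_eq_of_ne hl]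
    have h := hN _ (perm_mem σ) hfix
    rw [perm_conj] at h
    have h2 := congrFun (congrFun h i) i
    simp only [submatrix_apply] at h2
    rw [hσ, Equiv.swap_apply_left] at h2
    exact h2.symm
  set b : ℝ := if h1 : 1 < d then N ⟨1, h1⟩ ⟨1, h1⟩ else 0 with hb
  refine ⟨b, N i0 i0 - b, ?_⟩
  ext k l
  by_cases hkl : k = l
  · subst hkl
    by_cases hk : k = i0
    · subst hk
      simp only [Matrix.add_apply, Matrix.smul_apply, one_apply_eq, vecMulVec_apply,
        smul_eq_mul]
      rw [he]
      simp [Pi.single_eq_same]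
    · have h1 : 1 < d := by
        rcases Nat.lt_or_ge 1 d with h | h
        · exact h
        · exfalso
          apply hk
          have : (k : ℕ) = 0 := by omega
          exact Fin.ext this
      have hone : (⟨1, h1⟩ : Fin d) ≠ i0 := by
        intro hc
        have := congrArg Fin.val hc
        simp [hi0] at this
      have hkk : N k k = b := by rw [hb, dif_pos h1]; exact hdiag k ⟨1, h1⟩ hk hone
      simp only [Matrix.add_apply, Matrix.smul_apply, one_apply_eq, vecMulVec_apply,
        smul_eq_mul]
      rw [he, hkk]
      simp [Pi.single_eq_of_ne hk]
  · have hz : e₀ k * e₀ l = 0 := by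
      by_cases hk : k = i0
      · have hl : l ≠ i0 := fun hc => hkl (by rw [hk, hc])
        rw [he]; simp [Pi.single_eq_of_ne hl]
      · rw [he]; simp [Pi.single_eq_of_ne hk]
    simp only [Matrix.add_apply, Matrix.smul_apply, vecMulVec_apply, smul_eq_mul,
      one_apply_ne hkl, hoff k l hkl]
    rw [← he] at *
    rw [hz]
    ring

end Helpers

/-- Every `O(d)`-equivariant polynomial `f : ℝ^d → ℝ^{d×d}_{sym}` of degree at
most 2 has the form `f(a) = β₀ I + β₁ ⟨a,a⟩ I + β₂ a aᵀ`. -/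
theorem stmt15 {d : ℕ} (f : (Fin d → ℝ) → Matrix (Fin d) (Fin d) ℝ)
    (hpoly : ∀ i j : Fin d, ∃ p : MvPolynomial (Fin d) ℝ,
      p.totalDegree ≤ 2 ∧ ∀ a : Fin d → ℝ, f a i j = MvPolynomial.eval a p)
    (hsymm : ∀ a : Fin d → ℝ, (f a).IsSymm)
    (hequiv : ∀ M ∈ Matrix.orthogonalGroup (Fin d) ℝ, ∀ a : Fin d → ℝ,
      f (M.mulVec a) = M * f a * Mᵀ) :
    ∃ β₀ β₁ β₂ : ℝ, ∀ a : Fin d → ℝ,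
      f a = β₀ • (1 : Matrix (Fin d) (Fin d) ℝ) +
        (β₁ * ∑ i, a i * a i) • (1 : Matrix (Fin d) (Fin d) ℝ) +
        β₂ • Matrix.vecMulVec a a := by
  rcases Nat.eq_zero_or_pos d with hd | hd
  · refine ⟨0, 0, 0, fun a => ?_⟩
    subst hd
    ext i j
    exact i.elim0
  set i0 : Fin d := ⟨0, hd⟩ with hi0
  set e₀ : Fin d → ℝ := Pi.single i0 1 with he
  -- evenness
  have hneg : ∀ a : Fin d → ℝ, f (-a) = f a := by
    intro a
    have hm : (-1 : Matrix (Fin d) (Fin d) ℝ) ∈ Matrix.orthogonalGroup (Fin d) ℝ :=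
      memO _ (by simp)
    have h := hequiv _ hm a
    rw [Matrix.neg_mulVec, Matrix.one_mulVec] at h
    rw [h]
    simp
  -- scaling
  have hscale : ∀ (a : Fin d → ℝ) (t : ℝ), f (t • a) = f 0 + t^2 • (f a - f 0) := by
    intro a t
    ext i j
    obtain ⟨p, hp, hpe⟩ := hpoly i j
    have h := interp p hp a t
    rw [← hpe (t • a), ← hpe 0, ← hpe a, ← hpe (-a), hneg a] at h
    simp only [Matrix.add_apply, Matrix.smul_apply, Matrix.sub_apply, smul_eq_mul]
    rw [h]; ring
  -- invariance of f 0
  have hA : ∀ M ∈ Matrix.orthogonalGroup (Fin d) ℝ, M * f 0 * Mᵀ = f 0 := by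
    intro M hM
    have h := (hequiv M hM 0).symm
    rwa [Matrix.mulVec_zero] at h
  obtain ⟨β₀, hβ₀⟩ := scalar_of_conj hd (f 0) hA
  -- structure of N
  set N : Matrix (Fin d) (Fin d) ℝ := f e₀ - f 0 with hN
  have hNinv : ∀ M ∈ Matrix.orthogonalGroup (Fin d) ℝ,
      M.mulVec (Pi.single (⟨0,hd⟩ : Fin d) (1:ℝ)) = Pi.single ⟨0,hd⟩ 1 → M * N * Mᵀ = N := by
    intro M hM hMe
    have h1 := hequiv M hM e₀
    rw [show M.mulVec e₀ = e₀ from hMe] at h1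
    rw [hN, Matrix.mul_sub, Matrix.sub_mul, ← h1, hA M hM]
  obtain ⟨β₁, β₂, hNeq⟩ := stab_struct hd N hNinv
  rw [← he] at hNeq
  refine ⟨β₀, β₁, β₂, fun a => ?_⟩
  -- norm facts
  have hsum_nonneg : (0:ℝ) ≤ ∑ i, a i * a i :=
    Finset.sum_nonneg fun i _ => mul_self_nonneg _
  by_cases ha : a = 0
  · subst ha
    have hv : vecMulVec (0 : Fin d → ℝ) (0 : Fin d → ℝ) = (0 : Matrix (Fin d) (Fin d) ℝ) := by
      ext i j; simp [vecMulVec_apply]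
    simp [hβ₀, hv]
  · set r : ℝ := Real.sqrt (∑ i, a i * a i) with hr
    have hr2 : r * r = ∑ i, a i * a i := Real.mul_self_sqrt hsum_nonneg
    set x : Fin d → ℝ := r • e₀ with hx
    have he₀sum : ∑ i, e₀ i * e₀ i = 1 := by
      rw [he]
      rw [Finset.sum_eq_single i0]
      · simp
      · intro b _ hb; simp [Pi.single_eq_of_ne hb]
      · intro hc; exact absurd (Finset.mem_univ i0) hc
    have hxnorm : ∑ i, x i * x i = ∑ i, a i * a i := by
      rw [hx]
      have : ∑ i, (r • e₀) i * (r • e₀) i = (r * r) * ∑ i, e₀ i * e₀ i := by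
        rw [Finset.mul_sum]
        exact Finset.sum_congr rfl fun i _ => by simp; ring
      rw [this, he₀sum, mul_one, hr2]
    obtain ⟨M, hM, hMx⟩ : ∃ M ∈ Matrix.orthogonalGroup (Fin d) ℝ, M.mulVec x = a := by
      by_cases hxa : x - a = 0
      · exact ⟨1, memO 1 (by simp), by rw [Matrix.one_mulVec]; exact sub_eq_zero.mp hxa⟩
      · exact ⟨hh (x - a), hh_mem _ (fun h => hxa (sum_sq_eq_zero h)), hh_maps x a hxnorm hxa⟩
    have hfx : f x = f 0 + (r * r) • N := by
      rw [hx, hscale e₀ r, hN, pow_two]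
    have hfa : f a = M * f x * Mᵀ := by
      rw [← hMx]
      exact hequiv M hM x
    rw [hfx, Matrix.mul_add, Matrix.add_mul, hA M hM, Matrix.mul_smul, Matrix.smul_mul,
      hNeq, Matrix.mul_add, Matrix.add_mul, Matrix.mul_smul, Matrix.smul_mul,
      Matrix.mul_smul, Matrix.smul_mul, Matrix.mul_one, memO' hM, conj_vmv] at hfa
    have hMe₀ : vecMulVec a a = (r * r) • vecMulVec (M.mulVec e₀) (M.mulVec e₀) := by
      rw [← vmv_smul, ← Matrix.mulVec_smul, ← hx, hMx]
    rw [hfa, hβ₀, hMe₀, ← hr2]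
    module
end
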